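/- Let M₀ > 0 and 0 < a ≤ a_crit := (15M₀/(32π))^(2/5). Then the minimum of the function S(R, r₀) = 4π(R⁴ + R²r₀² + R²a) over all R > 0 and r₀ ≥ 0 satisfying (4π/15)·(3R⁵ + 5R³r₀² + 5R³a) = M₀ equals 8π·(15M₀/(32π))^(4/5) (in particular it is independent of a), and it is attained at R = (15M₀/(32π))^(1/5) and r₀ = √(R² - a), i.e. where R² = r₀² + a. -/

import Mathlib

/-!
With `k = (15M₀/(32π))^(1/5)` the mass constraint reads `3R⁵ + 5R³(r₀² + a) = 8k⁵`, so the
area S satisfies `5R · S = 4π(2R⁵ + 8k⁵)`. The AM–GM inequality `R⁵ + 4k⁵ ≥ 5Rk⁴` then gives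
`S ≥ 8πk⁴`, with equality at `R = k`. Any sphere with `R² = r₀² + a` has `S = 8πR⁴` and mass
`(32π/15)R⁵`, and `a ≤ k²` is exactly what makes `r₀ = √(k² - a)` available.
-/

open Real

noncomputable section

def weightedArea (a R r₀ : ℝ) : ℝ := 4 * π * (R ^ 4 + R ^ 2 * r₀ ^ 2 + R ^ 2 * a)

def weightedMass (a R r₀ : ℝ) : ℝ :=
  (4 * π / 15) * (3 * R ^ 5 + 5 * R ^ 3 * r₀ ^ 2 + 5 * R ^ 3 * a)

end

theorem five_mul_mul_pow_four_le_pow_five_add {R k : ℝ} (hR : 0 ≤ R) (hk : 0 ≤ k) :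
    5 * R * k ^ 4 ≤ R ^ 5 + 4 * k ^ 5 := by
  have hfactor : R ^ 5 + 4 * k ^ 5 - 5 * R * k ^ 4 =
      (R - k) ^ 2 * (R ^ 3 + 2 * R ^ 2 * k + 3 * R * k ^ 2 + 4 * k ^ 3) := by ring
  have : 0 ≤ (R - k) ^ 2 * (R ^ 3 + 2 * R ^ 2 * k + 3 * R * k ^ 2 + 4 * k ^ 3) := by positivity
  linarith

theorem weightedArea_ge_of_weightedMass_eq {a R r₀ k : ℝ} (hR : 0 < R) (hk : 0 ≤ k)
    (hmass : weightedMass a R r₀ = 32 * π / 15 * k ^ 5) :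
    8 * π * k ^ 4 ≤ weightedArea a R r₀ := by
  have hconstraint : 3 * R ^ 5 + 5 * R ^ 3 * r₀ ^ 2 + 5 * R ^ 3 * a = 8 * k ^ 5 := by
    refine mul_left_cancel₀ (by positivity : 4 * π / 15 ≠ 0) ?_
    rw [← weightedMass, hmass]
    ring
  have hscaled : 5 * R * weightedArea a R r₀ = 4 * π * (2 * R ^ 5 + 8 * k ^ 5) := by
    unfold weightedArea
    linear_combination 4 * π * hconstraint
  refine le_of_mul_le_mul_left ?_ (by positivity : 0 < 5 * R)
  calc 5 * R * (8 * π * k ^ 4) = 8 * π * (5 * R * k ^ 4) := by ring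
    _ ≤ 8 * π * (R ^ 5 + 4 * k ^ 5) := by
      gcongr
      exact five_mul_mul_pow_four_le_pow_five_add hR.le hk
    _ = 5 * R * weightedArea a R r₀ := by rw [hscaled]; ring

theorem weightedArea_eq_of_sq_eq {a R r₀ : ℝ} (h : R ^ 2 = r₀ ^ 2 + a) :
    weightedArea a R r₀ = 8 * π * R ^ 4 := by
  unfold weightedArea
  linear_combination -(4 * π * R ^ 2) * h

theorem weightedMass_eq_of_sq_eq {a R r₀ : ℝ} (h : R ^ 2 = r₀ ^ 2 + a) :
    weightedMass a R r₀ = 32 * π / 15 * R ^ 5 := by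
  unfold weightedMass
  linear_combination -(4 * π / 3 * R ^ 3) * h

open Real in
theorem stmt_17_general (M₀ a : ℝ) (hM : 0 < M₀)
    (hcrit : a ≤ (15 * M₀ / (32 * π)) ^ ((2 : ℝ) / 5)) :
    (∀ R r₀ : ℝ, 0 < R → 0 ≤ r₀ →
      (4 * π / 15) * (3 * R ^ 5 + 5 * R ^ 3 * r₀ ^ 2 + 5 * R ^ 3 * a) = M₀ →
      8 * π * (15 * M₀ / (32 * π)) ^ ((4 : ℝ) / 5) ≤
        4 * π * (R ^ 4 + R ^ 2 * r₀ ^ 2 + R ^ 2 * a)) ∧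
    (let R₀ : ℝ := (15 * M₀ / (32 * π)) ^ ((1 : ℝ) / 5);
     let r₀ : ℝ := Real.sqrt (R₀ ^ 2 - a);
     0 < R₀ ∧ 0 ≤ r₀ ∧ R₀ ^ 2 = r₀ ^ 2 + a ∧
      (4 * π / 15) * (3 * R₀ ^ 5 + 5 * R₀ ^ 3 * r₀ ^ 2 + 5 * R₀ ^ 3 * a) = M₀ ∧
      4 * π * (R₀ ^ 4 + R₀ ^ 2 * r₀ ^ 2 + R₀ ^ 2 * a) =
        8 * π * (15 * M₀ / (32 * π)) ^ ((4 : ℝ) / 5)) := by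
  set c : ℝ := 15 * M₀ / (32 * π)
  set k : ℝ := c ^ ((1 : ℝ) / 5)
  have hc : 0 ≤ c := by positivity
  have hk : 0 < k := rpow_pos_of_pos (by positivity) _
  have hk_pow (n : ℕ) : c ^ ((n : ℝ) / 5) = k ^ n := by
    rw [← rpow_mul_natCast hc]; ring_nf
  have hc4 : c ^ ((4 : ℝ) / 5) = k ^ 4 := by exact_mod_cast hk_pow 4
  have hM₀ : M₀ = 32 * π / 15 * k ^ 5 := by
    rw [← hk_pow 5]; norm_num [c]
  refine ⟨fun R r₀ hR _ hmass => ?_, ?_⟩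
  · rw [hc4]
    exact weightedArea_ge_of_weightedMass_eq hR hk.le (hmass.trans hM₀)
  · intro R₀ r₀
    have hak : a ≤ k ^ 2 := by exact_mod_cast hk_pow 2 ▸ hcrit
    have hsq : k ^ 2 = r₀ ^ 2 + a := by rw [sq_sqrt (sub_nonneg.2 hak)]; ring
    refine ⟨hk, sqrt_nonneg _, hsq, ?_, ?_⟩
    · exact (weightedMass_eq_of_sq_eq hsq).trans hM₀.symm
    · rw [hc4]; exact weightedArea_eq_of_sq_eq hsq

open Real in
/-- In `ℝ³` with density `ρ(r) = r² + a`, `0 < a ≤ (15M₀/(32π))^(2/5)`: the minimum of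
the weighted surface area `4π(R⁴ + R²r₀² + R²a)` over spheres of weighted mass `M₀`
(i.e. `(4π/15)(3R⁵ + 5R³r₀² + 5R³a) = M₀`) equals `8π(15M₀/(32π))^(4/5)`, independent
of `a`, attained at `R = (15M₀/(32π))^(1/5)` and `r₀ = √(R² - a)`, i.e. where
`R² = r₀² + a`. -/
theorem stmt_17 (M₀ a : ℝ) (hM : 0 < M₀) (ha : 0 < a)
    (hcrit : a ≤ (15 * M₀ / (32 * π)) ^ ((2 : ℝ) / 5)) :
    (∀ R r₀ : ℝ, 0 < R → 0 ≤ r₀ →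
      (4 * π / 15) * (3 * R ^ 5 + 5 * R ^ 3 * r₀ ^ 2 + 5 * R ^ 3 * a) = M₀ →
      8 * π * (15 * M₀ / (32 * π)) ^ ((4 : ℝ) / 5) ≤
        4 * π * (R ^ 4 + R ^ 2 * r₀ ^ 2 + R ^ 2 * a)) ∧
    (let R₀ : ℝ := (15 * M₀ / (32 * π)) ^ ((1 : ℝ) / 5);
     let r₀ : ℝ := Real.sqrt (R₀ ^ 2 - a);
     0 < R₀ ∧ 0 ≤ r₀ ∧ R₀ ^ 2 = r₀ ^ 2 + a ∧
      (4 * π / 15) * (3 * R₀ ^ 5 + 5 * R₀ ^ 3 * r₀ ^ 2 + 5 * R₀ ^ 3 * a) = M₀ ∧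
      4 * π * (R₀ ^ 4 + R₀ ^ 2 * r₀ ^ 2 + R₀ ^ 2 * a) =
        8 * π * (15 * M₀ / (32 * π)) ^ ((4 : ℝ) / 5)) :=
  stmt_17_general M₀ a hM hcrit
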